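/- For every integer k ≥ 0, the subgraph C_k of complete lines of the Sierpiński graph Γ_k satisfies cut^{1/2}(C_k) ≥ 2^k/160. -/

import Mathlib

/-!
The complete lines of `Γ_k` are exactly the rows and columns indexed by the `2^k` numbers below
`3^k` without ternary digit `1`: a line whose index has digit `1` at position `i` misses the point
with coordinate `3^i` and is disconnected there. A set `T` of `t` vertices meets at most `t` of
these rows and `t` of these columns. The untouched rows and columns cross one another, so they lie
in one component of `C_k - T`, and every vertex outside it lies on a touched line; there are at most
`2·3^k·t` such vertices. As `|C_k| ≥ 3^k·2^k`, a component of size at most `|C_k|/2` forces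
`3^k·2^k ≤ |C_k| ≤ 4·3^k·t`, i.e. `2^k ≤ 4t`.
-/

open scoped Classical

/-- Reachability within the subgraph of `X` induced on a vertex set `s`. -/
def SimpleGraph.ReachIn {V : Type*} (X : SimpleGraph V) (s : Set V) (v w : V) : Prop :=
  ∃ (hv : v ∈ s) (hw : w ∈ s), (X.induce s).Reachable ⟨v, hv⟩ ⟨w, hw⟩

/-- The vertex set of the connected component of `v` in the subgraph of `X` induced on `s`
(empty if `v ∉ s`). -/
def SimpleGraph.compIn {V : Type*} (X : SimpleGraph V) (s : Set V) (v : V) : Set V :=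
  {w | X.ReachIn s v w}

/-- `T` is a vertex set witnessing `cut¹ᐟ²` for the subgraph of `X` induced on the finite
vertex set `G`: after removing `T` from `G`, every connected component has at most
`|G|/2` vertices. -/
def IsHalfCutSet {V : Type*} (X : SimpleGraph V) (G T : Finset V) : Prop :=
  T ⊆ G ∧ ∀ v : V, 2 * (X.compIn (↑(G \ T)) v).ncard ≤ G.card

/-- `cut¹ᐟ²` of the subgraph of `X` induced on the finite vertex set `G`: the least size of
a vertex set whose removal leaves all connected components of size at most `|G|/2`. -/
noncomputable def cutHalf {V : Type*} (X : SimpleGraph V) (G : Finset V) : ℕ :=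
  sInf {t | ∃ T : Finset V, IsHalfCutSet X G T ∧ T.card = t}

/-- The `1/2`-separation profile of `X`, over finite subgraphs with vertex set inside `W`. -/
noncomputable def sepHalf {V : Type*} (X : SimpleGraph V) (W : Set V) (n : ℕ) : ℕ :=
  sSup {c | ∃ G : Finset V, ↑G ⊆ W ∧ G.card ≤ n ∧ c = cutHalf X G}

/-- The `i`-th digit of `x` in base `b`. -/
def digit (b i x : ℕ) : ℕ := x / b ^ i % b

/-- Membership in the vertex set of the infinite Sierpinski graph: no position at which
both coordinates have base-3 digit `1`. -/
def SierpMem (p : ℕ × ℕ) : Prop :=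
  ∀ i : ℕ, ¬(digit 3 i p.1 = 1 ∧ digit 3 i p.2 = 1)

/-- The infinite Sierpinski graph `S`, with edges between valid points at `ℓ¹`-distance 1. -/
def SierpGraph : SimpleGraph (ℕ × ℕ) where
  Adj p q := SierpMem p ∧ SierpMem q ∧ |(p.1 : ℤ) - q.1| + |(p.2 : ℤ) - q.2| = 1
  symm := by
    constructor
    rintro p q ⟨hp, hq, h⟩
    exact ⟨hq, hp, by
      rw [abs_sub_comm (q.1 : ℤ) (p.1 : ℤ), abs_sub_comm (q.2 : ℤ) (p.2 : ℤ)]; exact h⟩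
  loopless := by constructor; rintro p ⟨-, -, h⟩; simp at h

/-- The vertex set of the sphere `Γ_k`. -/
noncomputable def GammaV (k : ℕ) : Finset (ℕ × ℕ) :=
  (Finset.range (3 ^ k) ×ˢ Finset.range (3 ^ k)).filter SierpMem

/-- The intersection of the vertical line `V_x` with `Γ_k`. -/
def VlineSet (k x : ℕ) : Set (ℕ × ℕ) := {p | p ∈ GammaV k ∧ p.1 = x}

/-- The intersection of the horizontal line `H_y` with `Γ_k`. -/
def HlineSet (k y : ℕ) : Set (ℕ × ℕ) := {p | p ∈ GammaV k ∧ p.2 = y}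

/-- The vertical line `V_x` is complete in `Γ_k`: its intersection with `Γ_k` is connected. -/
def CompleteV (k x : ℕ) : Prop := (SierpGraph.induce (VlineSet k x)).Connected

/-- The horizontal line `H_y` is complete in `Γ_k`: its intersection with `Γ_k` is connected. -/
def CompleteH (k y : ℕ) : Prop := (SierpGraph.induce (HlineSet k y)).Connected

/-- The vertex set of the complete-lines subgraph `C_k` of `Γ_k`. -/
noncomputable def CkV (k : ℕ) : Finset (ℕ × ℕ) :=
  (GammaV k).filter fun p => CompleteV k p.1 ∨ CompleteH k p.2

open Finset SimpleGraph

lemma digit_succ (b i y : ℕ) : digit b (i + 1) y = digit b i (y / b) := by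
  rw [digit, digit, Nat.div_div_eq_div_mul, ← pow_succ']

lemma digit_zero_left (b y : ℕ) : digit b 0 y = y % b := by
  simp [digit]

lemma digit_eq_zero_of_lt_pow {b i y : ℕ} (h : y < b ^ i) : digit b i y = 0 := by
  rw [digit, Nat.div_eq_of_lt h, Nat.zero_mod]

lemma digit_pow_self {b : ℕ} (hb : 1 < b) (i : ℕ) : digit b i (b ^ i) = 1 := by
  rw [digit, Nat.div_self (by positivity), Nat.one_mod_eq_one.2 hb.ne']

noncomputable def ternaryCantor (k : ℕ) : Finset ℕ :=
  (range (3 ^ k)).filter fun y => ∀ i, digit 3 i y ≠ 1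

lemma mem_ternaryCantor {k y : ℕ} :
    y ∈ ternaryCantor k ↔ y < 3 ^ k ∧ ∀ i, digit 3 i y ≠ 1 := by
  simp [ternaryCantor]

lemma ternaryCantor_succ (k : ℕ) :
    ternaryCantor (k + 1) = (ternaryCantor k ×ˢ {0, 2}).image fun p => 3 * p.1 + p.2 := by
  ext y
  simp only [mem_image, mem_product, mem_insert, mem_singleton, mem_ternaryCantor, Prod.exists,
    pow_succ]
  constructor
  · rintro ⟨hy, hd⟩
    have h0 := hd 0
    rw [digit_zero_left] at h0
    refine ⟨y / 3, y % 3, ⟨⟨by omega, fun i => ?_⟩, by omega⟩, by omega⟩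
    rw [← digit_succ]
    exact hd (i + 1)
  · rintro ⟨q, r, ⟨⟨hq, hd⟩, hr⟩, rfl⟩
    refine ⟨by omega, fun i => ?_⟩
    cases i with
    | zero => rw [digit_zero_left]; omega
    | succ i => rw [digit_succ, show (3 * q + r) / 3 = q by omega]; exact hd i

lemma card_ternaryCantor (k : ℕ) : #(ternaryCantor k) = 2 ^ k := by
  induction k with
  | zero =>
    rw [show ternaryCantor 0 = {0} by
      ext y
      simp only [mem_ternaryCantor, mem_singleton, pow_zero]
      exact ⟨fun h => by omega, fun h => ⟨by omega, fun i => by simp [h, digit]⟩⟩]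
    rfl
  | succ k ih =>
    rw [ternaryCantor_succ, card_image_of_injOn, card_product, ih]
    · rfl
    · rintro ⟨a, b⟩ hab ⟨c, d⟩ hcd h
      simp only [coe_product, Set.mem_prod, coe_insert, coe_singleton, Set.mem_insert_iff,
        Set.mem_singleton_iff] at hab hcd h
      ext <;> omega

lemma pow_sub_one_mem_ternaryCantor (k : ℕ) : 3 ^ k - 1 ∈ ternaryCantor k := by
  induction k with
  | zero => simp [mem_ternaryCantor, digit]
  | succ k ih =>
    rw [ternaryCantor_succ]
    refine mem_image.2 ⟨(3 ^ k - 1, 2), by simp [ih], ?_⟩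
    have := Nat.one_le_pow k 3 (by norm_num)
    rw [pow_succ]
    omega

namespace SimpleGraph

variable {V : Type*} {X : SimpleGraph V} {s : Set V} {u v w : V}

lemma ReachIn.symm (h : X.ReachIn s u v) : X.ReachIn s v u :=
  let ⟨hu, hv, r⟩ := h
  ⟨hv, hu, r.symm⟩

lemma ReachIn.trans (huv : X.ReachIn s u v) (hvw : X.ReachIn s v w) : X.ReachIn s u w :=
  let ⟨hu, _, r⟩ := huv
  let ⟨_, hw, r'⟩ := hvw
  ⟨hu, hw, r.trans r'⟩

lemma reachIn_of_adj_succ {f : ℕ → V} {m : ℕ} (hs : ∀ i < m, f i ∈ s)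
    (hadj : ∀ i, i + 1 < m → X.Adj (f i) (f (i + 1))) {a b : ℕ} (ha : a < m) (hb : b < m) :
    X.ReachIn s (f a) (f b) := by
  suffices h : ∀ a (ha : a < m), X.ReachIn s (f 0) (f a) from (h a ha).symm.trans (h b hb)
  intro a ha
  induction a with
  | zero => exact ⟨hs 0 ha, hs 0 ha, .rfl⟩
  | succ a ih =>
    exact (ih (by omega)).trans ⟨hs a (by omega), hs (a + 1) ha, Adj.reachable (hadj a ha)⟩

lemma compIn_subset (s : Set V) (v : V) : X.compIn s v ⊆ s :=
  fun _ ⟨_, hw, _⟩ => hw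

lemma isHalfCutSet_self (X : SimpleGraph V) (G : Finset V) : IsHalfCutSet X G G := by
  refine ⟨subset_rfl, fun v => ?_⟩
  rw [Finset.sdiff_self, Finset.coe_empty, Set.subset_empty_iff.1 (X.compIn_subset ∅ v)]
  simp

lemma exists_isHalfCutSet_card_eq_cutHalf (X : SimpleGraph V) (G : Finset V) :
    ∃ T, IsHalfCutSet X G T ∧ T.card = cutHalf X G :=
  Nat.sInf_mem (s := {t | ∃ T, IsHalfCutSet X G T ∧ T.card = t})
    ⟨_, G, X.isHalfCutSet_self G, rfl⟩

end SimpleGraph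

lemma mem_gammaV {k : ℕ} {p : ℕ × ℕ} : p ∈ GammaV k ↔ p.1 < 3 ^ k ∧ p.2 < 3 ^ k ∧ SierpMem p := by
  simp [GammaV, and_assoc]

lemma sierpMem_swap {p : ℕ × ℕ} : SierpMem p.swap ↔ SierpMem p := by
  simp only [SierpMem, Prod.fst_swap, Prod.snd_swap, and_comm]

lemma sierpGraph_adj_swap {p q : ℕ × ℕ} : SierpGraph.Adj p.swap q.swap ↔ SierpGraph.Adj p q := by
  simp only [SierpGraph, sierpMem_swap, Prod.fst_swap, Prod.snd_swap, add_comm]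

lemma sierpMem_of_mem_ternaryCantor_left {k x : ℕ} (hx : x ∈ ternaryCantor k) (y : ℕ) :
    SierpMem (x, y) :=
  fun i h => (mem_ternaryCantor.1 hx).2 i h.1

lemma sierpMem_of_mem_ternaryCantor_right {k y : ℕ} (hy : y ∈ ternaryCantor k) (x : ℕ) :
    SierpMem (x, y) :=
  fun i h => (mem_ternaryCantor.1 hy).2 i h.2

lemma sierpGraph_adj_succ_fst {k y : ℕ} (hy : y ∈ ternaryCantor k) (x : ℕ) :
    SierpGraph.Adj (x, y) (x + 1, y) :=
  ⟨sierpMem_of_mem_ternaryCantor_right hy x, sierpMem_of_mem_ternaryCantor_right hy (x + 1),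
    by norm_num⟩

lemma sierpGraph_adj_succ_snd {k x : ℕ} (hx : x ∈ ternaryCantor k) (y : ℕ) :
    SierpGraph.Adj (x, y) (x, y + 1) :=
  ⟨sierpMem_of_mem_ternaryCantor_left hx y, sierpMem_of_mem_ternaryCantor_left hx (y + 1),
    by norm_num⟩

lemma fst_eq_succ_or_of_sierpGraph_adj {p q : ℕ × ℕ} (h : SierpGraph.Adj p q) (hpq : p.2 = q.2) :
    p.1 = q.1 + 1 ∨ q.1 = p.1 + 1 := by
  obtain ⟨-, -, h⟩ := h
  rw [hpq, sub_self, abs_zero, add_zero, abs_eq zero_le_one] at h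
  omega

lemma reachIn_row {k y : ℕ} {s : Set (ℕ × ℕ)} (hy : y ∈ ternaryCantor k)
    (hs : ∀ x < 3 ^ k, (x, y) ∈ s) {a b : ℕ} (ha : a < 3 ^ k) (hb : b < 3 ^ k) :
    SierpGraph.ReachIn s (a, y) (b, y) :=
  reachIn_of_adj_succ (f := fun x => (x, y)) hs (fun x _ => sierpGraph_adj_succ_fst hy x) ha hb

lemma reachIn_col {k x : ℕ} {s : Set (ℕ × ℕ)} (hx : x ∈ ternaryCantor k)
    (hs : ∀ y < 3 ^ k, (x, y) ∈ s) {a b : ℕ} (ha : a < 3 ^ k) (hb : b < 3 ^ k) :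
    SierpGraph.ReachIn s (x, a) (x, b) :=
  reachIn_of_adj_succ (f := fun y => (x, y)) hs (fun y _ => sierpGraph_adj_succ_snd hx y) ha hb

lemma fst_lt_of_reachable_of_notMem {s : Set (ℕ × ℕ)} {y c : ℕ} (hs : ∀ p ∈ s, p.2 = y)
    (hc : (c, y) ∉ s) {u v : s} (h : (SierpGraph.induce s).Reachable u v) (hu : u.1.1 < c) :
    v.1.1 < c := by
  obtain ⟨w⟩ := h
  induction w with
  | nil => exact hu
  | @cons a b _ hab _ ih =>
    refine ih ?_
    have hbc : b.1.1 ≠ c := by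
      rintro rfl
      exact hc (by rw [← hs _ b.2]; exact b.2)
    have := fst_eq_succ_or_of_sierpGraph_adj (p := a.1) (q := b.1) hab
      ((hs _ a.2).trans (hs _ b.2).symm)
    omega

lemma completeH_iff {k y : ℕ} : CompleteH k y ↔ y ∈ ternaryCantor k := by
  constructor
  · intro hc
    obtain ⟨⟨p, hp⟩⟩ := hc.nonempty
    have hy : y < 3 ^ k := hp.2 ▸ (mem_gammaV.1 hp.1).2.1
    refine mem_ternaryCantor.2 ⟨hy, fun i hi => ?_⟩
    have hik : i < k := by
      by_contra! h
      rw [digit_eq_zero_of_lt_pow (hy.trans_le (Nat.pow_le_pow_right (by norm_num) h))] at hi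
      omega
    have hpow := Nat.pow_lt_pow_right (by norm_num : 1 < 3) hik
    have hfirst : (0, y) ∈ HlineSet k y :=
      ⟨mem_gammaV.2 ⟨by positivity, hy, fun j h => by simp [digit] at h⟩, rfl⟩
    have hlast : (3 ^ k - 1, y) ∈ HlineSet k y :=
      ⟨mem_gammaV.2 ⟨by omega, hy,
        sierpMem_of_mem_ternaryCantor_left (pow_sub_one_mem_ternaryCantor k) y⟩, rfl⟩
    have hgap : (3 ^ i, y) ∉ HlineSet k y :=
      fun h => (mem_gammaV.1 h.1).2.2 i ⟨digit_pow_self (by norm_num) i, hi⟩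
    have := fst_lt_of_reachable_of_notMem (fun p hp => hp.2) hgap
      (hc.preconnected ⟨_, hfirst⟩ ⟨_, hlast⟩) (by positivity)
    dsimp only at this
    omega
  · intro hy
    have hs : ∀ x < 3 ^ k, (x, y) ∈ HlineSet k y := fun x hx =>
      ⟨mem_gammaV.2 ⟨hx, (mem_ternaryCantor.1 hy).1, sierpMem_of_mem_ternaryCantor_right hy x⟩,
        rfl⟩
    refine (connected_iff _).2 ⟨?_, ⟨⟨_, hs 0 (by positivity)⟩⟩⟩
    rintro ⟨⟨a, y₁⟩, ha, h₁⟩ ⟨⟨b, y₂⟩, hb, h₂⟩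
    dsimp only at h₁ h₂
    subst h₁ h₂
    exact (reachIn_row hy hs (mem_gammaV.1 ha).1 (mem_gammaV.1 hb).1).2.2

def vlineIsoHline (k x : ℕ) :
    SierpGraph.induce (VlineSet k x) ≃g SierpGraph.induce (HlineSet k x) where
  toEquiv := (Equiv.prodComm ℕ ℕ).subtypeEquiv fun p => by
    simp only [VlineSet, HlineSet, Set.mem_ofPred_eq, mem_gammaV, Equiv.prodComm_apply,
      Prod.fst_swap, Prod.snd_swap, sierpMem_swap]
    tauto
  map_rel_iff' := sierpGraph_adj_swap

lemma completeV_iff {k x : ℕ} : CompleteV k x ↔ x ∈ ternaryCantor k :=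
  (vlineIsoHline k x).connected_iff.trans completeH_iff

lemma mem_ckV {k : ℕ} {p : ℕ × ℕ} :
    p ∈ CkV k ↔ p.1 < 3 ^ k ∧ p.2 ∈ ternaryCantor k ∨ p.1 ∈ ternaryCantor k ∧ p.2 < 3 ^ k := by
  obtain ⟨x, y⟩ := p
  simp only [CkV, mem_filter, mem_gammaV, completeV_iff, completeH_iff]
  constructor
  · rintro ⟨⟨hx, hy, -⟩, h | h⟩
    exacts [Or.inr ⟨h, hy⟩, Or.inl ⟨hx, h⟩]
  · rintro (⟨hx, hy⟩ | ⟨hx, hy⟩)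
    · exact ⟨⟨hx, (mem_ternaryCantor.1 hy).1, sierpMem_of_mem_ternaryCantor_right hy x⟩, .inr hy⟩
    · exact ⟨⟨(mem_ternaryCantor.1 hx).1, hy, sierpMem_of_mem_ternaryCantor_left hx y⟩, .inl hx⟩

section HalfCut

variable {k : ℕ} {T : Finset (ℕ × ℕ)}

lemma mem_ckV_sdiff_of_row {y : ℕ} (hy : y ∈ ternaryCantor k) (hyT : y ∉ T.image Prod.snd)
    {x : ℕ} (hx : x < 3 ^ k) : (x, y) ∈ CkV k \ T :=
  mem_sdiff.2 ⟨mem_ckV.2 (.inl ⟨hx, hy⟩), fun h => hyT (mem_image_of_mem Prod.snd h)⟩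

lemma mem_ckV_sdiff_of_col {x : ℕ} (hx : x ∈ ternaryCantor k) (hxT : x ∉ T.image Prod.fst)
    {y : ℕ} (hy : y < 3 ^ k) : (x, y) ∈ CkV k \ T :=
  mem_sdiff.2 ⟨mem_ckV.2 (.inr ⟨hx, hy⟩), fun h => hxT (mem_image_of_mem Prod.fst h)⟩

lemma mem_compIn_of_notMem_image {x₀ y₀ : ℕ} (hx₀ : x₀ ∈ ternaryCantor k)
    (hx₀T : x₀ ∉ T.image Prod.fst) (hy₀ : y₀ ∈ ternaryCantor k) (hy₀T : y₀ ∉ T.image Prod.snd)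
    {p : ℕ × ℕ} (hp : p ∈ CkV k) (hpx : p.1 ∉ T.image Prod.fst)
    (hpy : p.2 ∉ T.image Prod.snd) : p ∈ SierpGraph.compIn ↑(CkV k \ T) (x₀, y₀) := by
  obtain ⟨x, y⟩ := p
  have lt {z : ℕ} (hz : z ∈ ternaryCantor k) : z < 3 ^ k := (mem_ternaryCantor.1 hz).1
  rcases mem_ckV.1 hp with ⟨hx, hy⟩ | ⟨hx, hy⟩
  · exact (reachIn_col hx₀ (fun _ => mem_ckV_sdiff_of_col hx₀ hx₀T) (lt hy₀) (lt hy)).trans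
      (reachIn_row hy (fun _ => mem_ckV_sdiff_of_row hy hpy) (lt hx₀) hx)
  · exact (reachIn_row hy₀ (fun _ => mem_ckV_sdiff_of_row hy₀ hy₀T) (lt hx₀) (lt hx)).trans
      (reachIn_col hx (fun _ => mem_ckV_sdiff_of_col hx hpx) (lt hy₀) hy)

lemma two_pow_le_four_mul_card (hT : IsHalfCutSet SierpGraph (CkV k) T) : 2 ^ k ≤ 4 * #T := by
  by_contra! hlt
  have hD := card_ternaryCantor k
  obtain ⟨x₀, hx₀, hx₀T⟩ := exists_mem_notMem_of_card_lt_card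
    (s := T.image Prod.fst) (t := ternaryCantor k) (by grind [card_image_le])
  obtain ⟨y₀, hy₀, hy₀T⟩ := exists_mem_notMem_of_card_lt_card
    (s := T.image Prod.snd) (t := ternaryCantor k) (by grind [card_image_le])
  set N := 3 ^ k
  set K := SierpGraph.compIn ↑(CkV k \ T) (x₀, y₀)
  set B := (range N ×ˢ T.image Prod.snd) ∪ (T.image Prod.fst ×ˢ range N)
  have hcover : ↑(CkV k) ⊆ K ∪ ↑B := by
    intro p hp
    have hpN : p.1 < N ∧ p.2 < N := by
      rcases mem_ckV.1 hp with ⟨h₁, h₂⟩ | ⟨h₁, h₂⟩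
      exacts [⟨h₁, (mem_ternaryCantor.1 h₂).1⟩, ⟨(mem_ternaryCantor.1 h₁).1, h₂⟩]
    by_cases hpx : p.1 ∈ T.image Prod.fst
    · exact .inr (mem_union_right _ (mem_product.2 ⟨hpx, mem_range.2 hpN.2⟩))
    by_cases hpy : p.2 ∈ T.image Prod.snd
    · exact .inr (mem_union_left _ (mem_product.2 ⟨mem_range.2 hpN.1, hpy⟩))
    exact .inl (mem_compIn_of_notMem_image hx₀ hx₀T hy₀ hy₀T hp hpx hpy)
  have hKfin : K.Finite := (CkV k \ T).finite_toSet.subset (SierpGraph.compIn_subset _ _)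
  have hC : #(CkV k) ≤ K.ncard + #B := by
    rw [← Set.ncard_coe_finset (CkV k), ← Set.ncard_coe_finset B]
    exact (Set.ncard_le_ncard hcover (hKfin.union B.finite_toSet)).trans (Set.ncard_union_le _ _)
  have hB : #B ≤ N * #T + #T * N := by
    refine card_union_le _ _ |>.trans (add_le_add ?_ ?_) <;>
      simp only [card_product, card_range] <;> gcongr <;> exact card_image_le
  have hrows : N * 2 ^ k ≤ #(CkV k) := by
    rw [← hD, ← card_range N, ← card_product]
    exact card_le_card fun p hp => mem_ckV.2 (.inl (by simpa using hp))
  have hN : N * (4 * #T) < N * 2 ^ k := Nat.mul_lt_mul_of_pos_left hlt (by positivity)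
  -- `convert` bridges the classical `DecidableEq` instance inside `IsHalfCutSet`
  have hK : 2 * K.ncard ≤ #(CkV k) := by convert hT.2 (x₀, y₀)
  linarith

end HalfCut

lemma two_pow_le_four_mul_cutHalf (k : ℕ) : 2 ^ k ≤ 4 * cutHalf SierpGraph (CkV k) := by
  obtain ⟨T, hT, hcard⟩ := SierpGraph.exists_isHalfCutSet_card_eq_cutHalf (CkV k)
  exact hcard ▸ two_pow_le_four_mul_card hT

/-- The complete-lines subgraph `C_k` of `Γ_k` satisfies `cut¹ᐟ²(C_k) ≥ 2^k/160`. -/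
theorem sierpinski_complete_lines_cut' (k : ℕ) :
    (2 : ℝ) ^ k / 160 ≤ (cutHalf SierpGraph (CkV k) : ℝ) := by
  have h : (2 : ℝ) ^ k ≤ 4 * cutHalf SierpGraph (CkV k) := by
    exact_mod_cast two_pow_le_four_mul_cutHalf k
  rw [div_le_iff₀ (by norm_num)]
  linarith [(cutHalf SierpGraph (CkV k)).cast_nonneg (α := ℝ)]
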